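/- arXiv:0901.1937 — 3 statements merged into one kernel-verified Lean document; each statement's English description precedes it below -/
import Mathlib

section
/- Let x : ZMod 3 → ℕ → R be a tube system of rank 3 over a commutative ring R, and let m ≥ 0 and n ≥ 3m+3 be integers. Then x 2 (3m+3) · x 1 n = ∑_{s=0}^{m} ( x 1 (n+3m+3−6s) + x 3 (n+3m+1−6s) + x 2 (n+3m−1−6s) ) + x 1 (n−3m−3). (This is Proposition 7.2(3): X_{E_2[3m+3]} X_{E_1[n]} = X_{E_1[n+3m+3]} + X_{E_3[n+3m+1]} + X_{E_2[n+3m−1]} + X_{E_1[n+3m−3]} + X_{E_3[n+3m−5]} + X_{E_2[n+3m−7]} + ⋯ + X_{E_1[n−3m+3]} + X_{E_3[n−3m+1]} + X_{E_2[n−3m−1]} + X_{E_1[n−3m−3]}.) -/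
/-!
Put `δ := x 0 1 * x 1 1 * x 2 1 - x 0 1 - x 1 1 - x 2 1`. The cluster multiplication relations
give `δ * x i (e + 3) = x i (e + 6) + x i e` for every `i`: multiplication by `δ` is a Chebyshev
recurrence of step `3` on each sequence `x i`. In particular `k ↦ x 2 (3 * k)` obeys it, so both
`x 2 (3 * k) * x 1 (3 * k + d)` and the sum on the right satisfy the same two-term recurrence
in `k`, and the identity reduces to `k = 0` and `k = 1`, where it follows from
`x 2 3 = δ + x 0 1`.
-/

/-- A tube system of rank `r` over a commutative ring `R`: `x i n` models the
generalized cluster variable `X_{E_i[n]}` of the indecomposable regular module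
with quasi-socle `E_i` and quasi-length `n` in a tube of rank `r`, with the
convention `X_{E_i[0]} = 1`, together with the cluster multiplication
relations these variables satisfy. -/
def IsTubeSystem {R : Type*} [CommRing R] (r : ℕ) (x : ZMod r → ℕ → R) : Prop :=
  (∀ i, x i 0 = 1) ∧
  (∀ (i : ZMod r) (N : ℕ), 1 ≤ N →
    x (i + (N : ZMod r)) 1 * x i N = x i (N + 1) + x i (N - 1)) ∧
  (∀ (i : ZMod r) (N : ℕ), 1 ≤ N →
    x (i - 1) 1 * x i N = x (i - 1) (N + 1) + x (i + 1) (N - 1))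

open Finset

section Recurrence

def IsChebyshevRecurrent {R : Type*} [CommRing R] (c : R) (p : ℕ) (v : ℕ → R) : Prop :=
  ∀ e, c * v (e + p) = v (e + 2 * p) + v e

variable {R : Type*} [CommRing R] {c : R} {p : ℕ} {v w : ℕ → R}

theorem IsChebyshevRecurrent.add (hv : IsChebyshevRecurrent c p v)
    (hw : IsChebyshevRecurrent c p w) : IsChebyshevRecurrent c p (v + w) := fun e => by
  simp only [Pi.add_apply, mul_add, hv e, hw e]
  ring

theorem IsChebyshevRecurrent.comp_add_right (hv : IsChebyshevRecurrent c p v) (a : ℕ) :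
    IsChebyshevRecurrent c p (fun e => v (e + a)) := fun e => by
  simpa only [add_right_comm] using hv (e + a)

theorem IsChebyshevRecurrent.mul_sum_range (hv : IsChebyshevRecurrent c p v) (k d : ℕ) :
    c * ∑ s ∈ range (k + 1), v (2 * p * s + (d + p))
      = ∑ s ∈ range (k + 2), v (2 * p * s + d)
        + ∑ s ∈ range k, v (2 * p * s + (d + 2 * p)) := by
  have hstep : ∀ s, c * v (2 * p * s + (d + p))
      = v (2 * p * (s + 1) + d) + v (2 * p * s + d) := fun s => by
    rw [← add_assoc, hv]
    ring_nf
  have hshift : ∀ s, v (2 * p * s + (d + 2 * p)) = v (2 * p * (s + 1) + d) := fun s => by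
    ring_nf
  rw [mul_sum, sum_congr rfl fun s _ => hstep s, sum_add_distrib]
  simp only [hshift]
  linear_combination sum_range_succ' (fun s => v (2 * p * s + d)) k
    - sum_range_succ' (fun s => v (2 * p * s + d)) (k + 1)

theorem IsChebyshevRecurrent.mul_eq_sum_range {T : ℕ → R} (hw : IsChebyshevRecurrent c p w)
    (hv : IsChebyshevRecurrent c p v) (hT : IsChebyshevRecurrent c p T) (hw₀ : w 0 = 1)
    (hw₁ : ∀ d, w p * v (p + d) = T d + v d) (k d : ℕ) :
    w (p * k) * v (p * k + d) = ∑ s ∈ range k, T (2 * p * s + d) + v d := by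
  induction k using Nat.twoStepInduction generalizing d with
  | zero => simp [hw₀]
  | one => simpa using hw₁ d
  | more k ih₀ ih₁ =>
    have hw₂ := hw (p * k)
    have hk₁ := ih₁ (d + p)
    have hk₀ := ih₀ (d + 2 * p)
    rw [show p * k + p = p * (k + 1) by ring, show p * k + 2 * p = p * (k + 2) by ring] at hw₂
    rw [show p * (k + 1) + (d + p) = p * (k + 2) + d by ring] at hk₁
    rw [show p * k + (d + 2 * p) = p * (k + 2) + d by ring] at hk₀
    linear_combination c * hk₁ - hk₀ - v (p * (k + 2) + d) * hw₂ + hT.mul_sum_range k d + hv d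

end Recurrence

theorem ZMod.add_one_add_one_eq_sub_one (i : ZMod 3) : i + 1 + 1 = i - 1 := by
  revert i; decide

theorem ZMod.sub_one_sub_one_eq_add_one (i : ZMod 3) : i - 1 - 1 = i + 1 := by
  revert i; decide

-- Models `X_δ` (δ the imaginary root), which is `x i 3 - x (i + 1) 1` for every `i`.
def tubeDelta {R : Type*} [CommRing R] (x : ZMod 3 → ℕ → R) : R :=
  x 0 1 * x 1 1 * x 2 1 - x 0 1 - x 1 1 - x 2 1

theorem tubeDelta_eq {R : Type*} [CommRing R] (x : ZMod 3 → ℕ → R) (i : ZMod 3) :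
    tubeDelta x = x (i - 1) 1 * x i 1 * x (i + 1) 1 - x (i - 1) 1 - x i 1 - x (i + 1) 1 := by
  fin_cases i
  · change _ = x 2 1 * x 0 1 * x 1 1 - x 2 1 - x 0 1 - x 1 1
    unfold tubeDelta; ring
  · rfl
  · change _ = x 1 1 * x 2 1 * x 0 1 - x 1 1 - x 2 1 - x 0 1
    unfold tubeDelta; ring

namespace IsTubeSystem

variable {R : Type*} [CommRing R]

theorem mul_succ {r : ℕ} {x : ZMod r → ℕ → R} (hx : IsTubeSystem r x) (i : ZMod r)
    (N : ℕ) :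
    x (i - 1) 1 * x i (N + 1) = x (i - 1) (N + 2) + x (i + 1) N :=
  hx.2.2 i (N + 1) N.succ_pos

variable {x : ZMod 3 → ℕ → R}

theorem isChebyshevRecurrent (hx : IsTubeSystem 3 x) (i : ZMod 3) :
    IsChebyshevRecurrent (tubeDelta x) 3 (x i) := fun M => by
  have hi := hx.mul_succ i
  have hnext := hx.mul_succ (i + 1)
  have hprev := hx.mul_succ (i - 1)
  simp only [add_sub_cancel_right, ZMod.add_one_add_one_eq_sub_one] at hnext
  simp only [sub_add_cancel, ZMod.sub_one_sub_one_eq_add_one] at hprev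
  rw [tubeDelta_eq x i]
  linear_combination (x (i + 1) 1 * x i 1 - 1) * hi (M + 2) + x (i + 1) 1 * hnext (M + 1)
    + hprev M + x i 1 * hprev (M + 3) + hnext (M + 4)

theorem apply_three (hx : IsTubeSystem 3 x) (i : ZMod 3) : x i 3 = tubeDelta x + x (i + 1) 1 := by
  have hnext := hx.mul_succ (i + 1) 1
  have hprev := hx.mul_succ (i - 1) 0
  simp only [add_sub_cancel_right, ZMod.add_one_add_one_eq_sub_one, sub_add_cancel,
    ZMod.sub_one_sub_one_eq_add_one, hx.1, zero_add, Nat.reduceAdd] at hnext hprev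
  rw [tubeDelta_eq x i]
  linear_combination -hnext - x i 1 * hprev

theorem apply_two_three_mul_apply_one (hx : IsTubeSystem 3 x) (d : ℕ) :
    x 2 3 * x 1 (3 + d) = x 1 (d + 6) + x 0 (d + 4) + x 2 (d + 2) + x 1 d := by
  have h := hx.mul_succ 1 (d + 2)
  simp only [sub_self, show (1 + 1 : ZMod 3) = 2 from rfl] at h
  rw [hx.apply_three 2, show (2 + 1 : ZMod 3) = 0 from rfl, add_comm 3 d]
  linear_combination hx.isChebyshevRecurrent 1 d + h

end IsTubeSystem

/-- Proposition 7.2(3). -/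
theorem tube_rank_three_prop_7_2_3 {R : Type*} [CommRing R]
    (x : ZMod 3 → ℕ → R) (hx : IsTubeSystem 3 x)
    (m n : ℕ) (hn : 3 * m + 3 ≤ n) :
    x 2 (3 * m + 3) * x 1 n
      = (∑ s ∈ Finset.range (m + 1),
          (x 1 (n + 3 * m + 3 - 6 * s) + x 3 (n + 3 * m + 1 - 6 * s)
            + x 2 (n + 3 * m - 1 - 6 * s)))
        + x 1 (n - 3 * m - 3) := by
  obtain ⟨d, rfl⟩ : ∃ d, n = 3 * (m + 1) + d := ⟨n - (3 * m + 3), by omega⟩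
  have hT : IsChebyshevRecurrent (tubeDelta x) 3
      (fun e => x 1 (e + 6) + x 0 (e + 4) + x 2 (e + 2)) :=
    (((hx.isChebyshevRecurrent 1).comp_add_right 6).add
      ((hx.isChebyshevRecurrent 0).comp_add_right 4)).add
      ((hx.isChebyshevRecurrent 2).comp_add_right 2)
  rw [show 3 * m + 3 = 3 * (m + 1) by ring,
    (hx.isChebyshevRecurrent 2).mul_eq_sum_range (hx.isChebyshevRecurrent 1) hT (hx.1 2)
      hx.apply_two_three_mul_apply_one, ← sum_range_reflect]
  congr 1
  · refine sum_congr rfl fun s hs => ?_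
    have := mem_range.mp hs
    rw [show (3 : ZMod 3) = 0 from rfl]
    congr 3 <;> omega
  · congr 1; omega
end

section
/- Let x : ZMod 3 → ℕ → R be a tube system of rank 3 over a commutative ring R, and let m ≥ 0 and n ≥ 3m+1 be integers. Then x 1 (3m+1) · x 1 n = ∑_{t=0}^{2m} c_t, where c_t = x 1 1 · x 1 (n+3m−3t) if t is even and c_t = x 1 (n+3m−3t) if t is odd. (This is Proposition 7.4(1): X_{E_1[3m+1]} X_{E_1[n]} = X_{E_1} X_{E_1[n+3m]} + X_{E_1[n+3m−3]} + X_{E_1} X_{E_1[n+3m−6]} + X_{E_1[n+3m−9]} + ⋯ + X_{E_1} X_{E_1[n−3m+6]} + X_{E_1[n−3m+3]} + X_{E_1} X_{E_1[n−3m]}.) -/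
/-!
Write `a s = x 1 s`. Relation (ii) at `i = 1` reads `a (N + 2) + a N = c (N + 2) * a (N + 1)` with
the 3-periodic coefficients `c N = x N 1`. By Cayley–Hamilton for the `2 × 2` monodromy over one
period, every subsequence `s ↦ a (k + 3 * s)` satisfies the Chebyshev recurrence
`u (s + 2) + u s = T * u (s + 1)`, `T` the monodromy trace, and unwinding the recurrence gives
`a 4 = T * a 1 + 1`. For `p m = a (3 * m + 1)` and any Chebyshev sequence `b`, a two-step induction
on `m` (for all `b` at once, shifting `b` by two) gives `p m * b m = ∑_{s ≤ 2m} w s * b s` with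
`w s = a 1` for even `s` and `1` for odd `s`. Take `b s = a (n - 3 * m + 3 * s)` and reverse the sum.
-/
namespace PeriodicContinuant

open Finset

variable {R : Type*} [CommRing R]

/-- The trace of the product of the transfer matrices `!![c j, -1; 1, 0]`, `j = N, N + 1, N + 2`,
of the recurrence `a (j + 1) = c (j + 1) * a j - a (j - 1)`. -/
def monodromyTrace (c : ℕ → R) (N : ℕ) : R :=
  c N * c (N + 1) * c (N + 2) - c N - c (N + 1) - c (N + 2)

theorem monodromyTrace_eq_monodromyTrace_zero {c : ℕ → R} (hc : ∀ N, c (N + 3) = c N) (N : ℕ) :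
    monodromyTrace c N = monodromyTrace c 0 := by
  induction N with
  | zero => rfl
  | succ N ih =>
    rw [← ih]
    simp only [monodromyTrace, hc]
    ring

theorem add_six_add_self {c a : ℕ → R} (hc : ∀ N, c (N + 3) = c N)
    (hrec : ∀ N, a (N + 2) + a N = c (N + 2) * a (N + 1)) (N : ℕ) :
    a (N + 6) + a N = monodromyTrace c 0 * a (N + 3) := by
  have h1 : a (N + 2) + a N = c (N + 2) * a (N + 1) := hrec N
  have h2 : a (N + 3) + a (N + 1) = c (N + 3) * a (N + 2) := hrec (N + 1)
  have h3 : a (N + 4) + a (N + 2) = c (N + 4) * a (N + 3) := hrec (N + 2)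
  have h4 : a (N + 5) + a (N + 3) = c (N + 2) * a (N + 4) := hc (N + 2) ▸ hrec (N + 3)
  have h5 : a (N + 6) + a (N + 4) = c (N + 3) * a (N + 5) := hc (N + 3) ▸ hrec (N + 4)
  rw [← monodromyTrace_eq_monodromyTrace_zero hc (N + 2), monodromyTrace]
  linear_combination h1 + c (N + 2) * h2 - (1 - c (N + 2) * c (N + 3)) * h3
    + c (N + 3) * h4 + h5

theorem apply_four_eq {c a : ℕ → R} (hc : ∀ N, c (N + 3) = c N)
    (hrec : ∀ N, a (N + 2) + a N = c (N + 2) * a (N + 1)) (ha : a 1 = c 1 * a 0) :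
    a 4 = monodromyTrace c 0 * a 1 + a 0 := by
  have h2 : a 2 + a 0 = c 2 * a 1 := hrec 0
  have h3 : a 3 + a 1 = c 0 * a 2 := hc 0 ▸ hrec 1
  have h4 : a 4 + a 2 = c 1 * a 3 := hc 1 ▸ hrec 2
  rw [monodromyTrace]
  linear_combination h4 + c 1 * h3 + (c 0 * c 1 - 1) * h2 + c 0 * ha

def parityWeightedSum (α : R) (b : ℕ → R) (m : ℕ) : R :=
  ∑ s ∈ range (2 * m + 1), if Even s then α * b s else b s

theorem parityWeightedSum_zero (α : R) (b : ℕ → R) : parityWeightedSum α b 0 = α * b 0 := by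
  simp [parityWeightedSum]

theorem parityWeightedSum_succ (α : R) (b : ℕ → R) (m : ℕ) :
    parityWeightedSum α b (m + 1) = parityWeightedSum α b m + b (2 * m + 1) + α * b (2 * m + 2) := by
  have hodd : ¬Even (2 * m + 1) := by simp [parity_simps]
  have heven : Even (2 * m + 2) := by simp [parity_simps]
  simp only [parityWeightedSum, Nat.mul_succ, sum_range_succ, if_neg hodd, if_pos heven]

theorem mul_eq_parityWeightedSum {T α : R} {p : ℕ → R}
    (hp : ∀ s, p (s + 2) + p s = T * p (s + 1)) (hp0 : p 0 = α) (hp1 : p 1 = T * α + 1)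
    (b : ℕ → R) (hb : ∀ s, b (s + 2) + b s = T * b (s + 1)) (m : ℕ) :
    p m * b m = parityWeightedSum α b m := by
  induction m using Nat.twoStepInduction generalizing b with
  | zero => rw [hp0, parityWeightedSum_zero]
  | one =>
    have hb₀ : b 2 + b 0 = T * b 1 := hb 0
    rw [hp1, parityWeightedSum_succ, parityWeightedSum_zero]
    linear_combination -α * hb₀
  | more m ih₀ ih₁ =>
    have hb₂ : ∀ s, b (s + 2 + 2) + b (s + 2) = T * b (s + 2 + 1) := fun s => hb (s + 2)
    have e₀ := ih₀ (fun s => b (s + 2)) hb₂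
    have e₁ := ih₁ (fun s => b (s + 2)) hb₂
    have f₁ := ih₁ b hb
    have g₁ : parityWeightedSum α (fun s => b (s + 2)) (m + 1) =
        parityWeightedSum α (fun s => b (s + 2)) m + b (2 * m + 3) + α * b (2 * m + 4) :=
      parityWeightedSum_succ α _ m
    have g₂ : parityWeightedSum α b (m + 2) =
        parityWeightedSum α b (m + 1) + b (2 * m + 3) + α * b (2 * m + 4) :=
      parityWeightedSum_succ α b (m + 1)
    have hpm : p (m + 2) + p m = T * p (m + 1) := hp m
    have hbm : b (m + 3) + b (m + 1) = T * b (m + 2) := hb (m + 1)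
    linear_combination e₁ + f₁ - e₀ - g₂ + g₁ + b (m + 2) * hpm - p (m + 1) * hbm

theorem parityWeightedSum_eq_sum_reflect (α : R) (b : ℕ → R) (m : ℕ) :
    parityWeightedSum α b m =
      ∑ t ∈ range (2 * m + 1), if Even t then α * b (2 * m - t) else b (2 * m - t) := by
  rw [parityWeightedSum, ← sum_range_reflect]
  refine sum_congr rfl fun t ht => ?_
  have ht : t ≤ 2 * m := Nat.lt_succ_iff.mp (mem_range.mp ht)
  simp only [Nat.add_sub_cancel, Nat.even_sub ht, even_two_mul, true_iff]

end PeriodicContinuant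

theorem IsTubeSystem.recurrence {R : Type*} [CommRing R] {r : ℕ} {x : ZMod r → ℕ → R}
    (hx : IsTubeSystem r x) (N : ℕ) :
    x 1 (N + 2) + x 1 N = x ((N + 2 : ℕ) : ZMod r) 1 * x 1 (N + 1) := by
  have h := hx.2.1 1 (N + 1) N.succ_pos
  rw [show (1 : ZMod r) + ((N + 1 : ℕ) : ZMod r) = ((N + 2 : ℕ) : ZMod r) by push_cast; ring] at h
  exact h.symm

open PeriodicContinuant

/-- Proposition 7.4(1). -/
theorem tube_rank_three_prop_7_4_1 {R : Type*} [CommRing R]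
    (x : ZMod 3 → ℕ → R) (hx : IsTubeSystem 3 x)
    (m n : ℕ) (hn : 3 * m + 1 ≤ n) :
    x 1 (3 * m + 1) * x 1 n
      = ∑ t ∈ Finset.range (2 * m + 1),
          if Even t then x 1 1 * x 1 (n + 3 * m - 3 * t)
          else x 1 (n + 3 * m - 3 * t) := by
  let c : ℕ → R := fun N => x N 1
  have hc : ∀ N, c (N + 3) = c N := fun N => by
    simp only [c, Nat.cast_add, ZMod.natCast_self, add_zero]
  have hrec := hx.recurrence
  have hsix := add_six_add_self (c := c) hc hrec
  have hfour := apply_four_eq (c := c) hc hrec (by simp [c, hx.1])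
  have key := mul_eq_parityWeightedSum (p := fun s => x 1 (3 * s + 1))
    (fun s => hsix (3 * s + 1)) rfl (by simpa [hx.1] using hfour)
    (fun s => x 1 (n - 3 * m + 3 * s)) (fun s => hsix (n - 3 * m + 3 * s)) m
  rw [Nat.sub_add_cancel (by omega), parityWeightedSum_eq_sum_reflect] at key
  rw [key]
  refine Finset.sum_congr rfl fun t ht => ?_
  rw [show n - 3 * m + 3 * (2 * m - t) = n + 3 * m - 3 * t by
    have := Finset.mem_range.mp ht; omega]
end

section
/- Let x : ZMod 3 → ℕ → R be a tube system of rank 3 over a commutative ring R, and let m ≥ 0 and n ≥ 3m+3 be integers. Then x 1 (3m+3) · x 1 n = ∑_{t=0}^{2m+2} c_t, where c_t = x 1 (n+3m+3−3t) if t is even and c_t = x 2 1 · x 1 (n+3m+3−3t) if t is odd. (This is Proposition 7.4(3): X_{E_1[3m+3]} X_{E_1[n]} = X_{E_1[n+3m+3]} + X_{E_2} X_{E_1[n+3m]} + X_{E_1[n+3m−3]} + X_{E_2} X_{E_1[n+3m−6]} + ⋯ + X_{E_1[n−3m+3]} + X_{E_2} X_{E_1[n−3m]} + X_{E_1[n−3m−3]}.)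 -/
/-! By relation (ii), `y N = x 1 N` satisfies `y (N + 2) = a (N + 1) * y (N + 1) - y N` with the
3-periodic coefficients `a j = x (1 + j) 1`. Over one period the transfer matrices
`!![a j, -1; 1, 0]` multiply to a matrix of determinant `1` and trace
`τ = a 0 * a 1 * a 2 - (a 0 + a 1 + a 2)`, so by Cayley–Hamilton every subsequence
`j ↦ y (3 * j + k)` solves `z (j + 2) + z j = τ * z (j + 1)`; moreover `y 3 = τ + x 2 1`.
For solutions `w`, `z` of this recurrence with `w 0 = 1` and `w 1 = τ + s`, induction on `m` gives
`w m * z m = z 0 + s * z 1 + z 2 + ⋯ + z (2 * m)`. Taking `w j = y (3 * j)` and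
`z j = y (3 * j + k)` and reading the sum backwards gives the formula. -/

section

variable {R : Type*} [CommRing R]

theorem IsTubeSystem.apply_add_two {r : ℕ} {x : ZMod r → ℕ → R} (hx : IsTubeSystem r x)
    (i : ZMod r) (n : ℕ) : x i (n + 2) = x (i + (n + 1 : ℕ)) 1 * x i (n + 1) - x i n := by
  rw [hx.2.1 i (n + 1) (Nat.le_add_left 1 n), Nat.add_sub_cancel]
  ring

theorem sum_range_alternating_reflect (s : R) (z : ℕ → R) (M : ℕ) :
    ∑ t ∈ Finset.range (2 * M + 1), (if Even t then 1 else s) * z t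
      = ∑ t ∈ Finset.range (2 * M + 1), (if Even t then 1 else s) * z (2 * M - t) := by
  rw [← Finset.sum_range_reflect]
  refine Finset.sum_congr rfl fun t ht => ?_
  have ht : t ≤ 2 * M := Nat.lt_succ_iff.mp (Finset.mem_range.mp ht)
  have hparity : Even (2 * M - t) ↔ Even t := by simp [Nat.even_sub ht]
  simp only [Nat.add_sub_cancel, hparity]

def SolvesRecurrence (τ : R) (z : ℕ → R) : Prop :=
  ∀ j, z (j + 2) + z j = τ * z (j + 1)

theorem SolvesRecurrence.shift_two {τ : R} {z : ℕ → R} (hz : SolvesRecurrence τ z) :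
    SolvesRecurrence τ (fun j => z (j + 2)) :=
  fun j => hz (j + 2)

/-- `w m` is `U_m(τ) + s U_{m-1}(τ)` for the Chebyshev polynomials `U` of the second kind, and
`U_m(τ) z_m = z_0 + z_2 + ⋯ + z_{2m}`. -/
theorem SolvesRecurrence.mul_eq_sum {τ s : R} {w : ℕ → R} (hw : SolvesRecurrence τ w)
    (hw₀ : w 0 = 1) (hw₁ : w 1 = τ + s) (m : ℕ) {z : ℕ → R} (hz : SolvesRecurrence τ z) :
    w m * z m = ∑ t ∈ Finset.range (2 * m + 1), (if Even t then 1 else s) * z t := by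
  induction m using Nat.twoStepInduction generalizing z with
  | zero => simp [hw₀]
  | one =>
    simp only [Finset.sum_range_succ, Finset.sum_range_zero, Nat.reduceMul, Nat.reduceAdd,
      zero_add, Even.zero, ↓reduceIte, Nat.not_even_one, even_two, one_mul]
    linear_combination z 1 * hw₁ - hz 0
  | more m ih ih₁ =>
    have h₀ := ih hz.shift_two
    have h₁ := ih₁ hz
    have h₂ := ih₁ hz.shift_two
    rw [show 2 * (m + 1) + 1 = 2 * m + 3 by ring] at h₁ h₂
    have hodd : ¬ Even (2 * m + 3) := by simp [Nat.even_add_one, parity_simps]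
    have heven : Even (2 * m + 3 + 1) := by simp [Nat.even_add_one, parity_simps]
    have hsplit : ∑ t ∈ Finset.range (2 * m + 3), (if Even t then 1 else s) * z (t + 2)
        = ∑ t ∈ Finset.range (2 * m + 1), (if Even t then 1 else s) * z (t + 2)
          + s * z (2 * m + 3) + z (2 * m + 3 + 1) := by
      rw [Finset.sum_range_succ, Finset.sum_range_succ]
      simp [Nat.even_add_one, parity_simps]
    rw [show 2 * (m + 2) + 1 = 2 * m + 3 + 1 + 1 by ring, Finset.sum_range_succ,
      Finset.sum_range_succ, if_neg hodd, if_pos heven, one_mul]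
    linear_combination z (m + 2) * hw m - w (m + 1) * hz (m + 1) + h₂ + h₁ - h₀ + hsplit

def monodromyTrace (c : ZMod 3 → R) : R := c 0 * c 1 * c 2 - (c 0 + c 1 + c 2)

theorem monodromyTrace_eq_rotate (c : ZMod 3 → R) (z : ZMod 3) :
    monodromyTrace c = c z * c (z + 1) * c (z + 2) - (c z + c (z + 1) + c (z + 2)) := by
  unfold monodromyTrace
  obtain rfl | rfl | rfl : z = 0 ∨ z = 1 ∨ z = 2 := by revert z; decide
  · simp
  · rw [show (1 + 1 : ZMod 3) = 2 from rfl, show (1 + 2 : ZMod 3) = 0 from rfl]; ring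
  · rw [show (2 + 1 : ZMod 3) = 0 from rfl, show (2 + 2 : ZMod 3) = 1 from rfl]; ring

variable {c : ZMod 3 → R} {y : ℕ → R}

theorem apply_add_six_add_apply_eq
    (hy : ∀ n : ℕ, y (n + 2) = c (n + 1 : ℕ) * y (n + 1) - y n) (n : ℕ) :
    y (n + 6) + y n = monodromyTrace c * y (n + 3) := by
  have hc : ∀ k : ℕ, c (k + 3 : ℕ) = c k := by
    intro k; push_cast; rw [show (3 : ZMod 3) = 0 from rfl, add_zero]
  have hT : monodromyTrace c = c (n + 1 : ℕ) * c (n + 2 : ℕ) * c (n + 3 : ℕ)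
      - (c (n + 1 : ℕ) + c (n + 2 : ℕ) + c (n + 3 : ℕ)) := by
    rw [monodromyTrace_eq_rotate c (n + 1 : ℕ)]; push_cast; ring_nf
  have h₃ : y (n + 5) = c (n + 1 : ℕ) * y (n + 4) - y (n + 3) := by
    rw [← hc]; exact hy (n + 3)
  have h₄ : y (n + 6) = c (n + 2 : ℕ) * y (n + 5) - y (n + 4) := by
    rw [← hc]; exact hy (n + 4)
  linear_combination h₄ + c (n + 2 : ℕ) * h₃ + (c (n + 1 : ℕ) * c (n + 2 : ℕ) - 1) * hy (n + 2)
    + c (n + 1 : ℕ) * hy (n + 1) + hy n - y (n + 3) * hT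

theorem solvesRecurrence_apply_three_mul_add
    (hy : ∀ n : ℕ, y (n + 2) = c (n + 1 : ℕ) * y (n + 1) - y n) (k : ℕ) :
    SolvesRecurrence (monodromyTrace c) (fun j => y (3 * j + k)) := by
  intro j
  have h := apply_add_six_add_apply_eq hy (3 * j + k)
  rwa [show 3 * j + k + 6 = 3 * (j + 2) + k by ring,
    show 3 * j + k + 3 = 3 * (j + 1) + k by ring] at h

theorem apply_three_eq_monodromyTrace_add
    (hy : ∀ n : ℕ, y (n + 2) = c (n + 1 : ℕ) * y (n + 1) - y n)
    (hy₀ : y 0 = 1) (hy₁ : y 1 = c 0) : y 3 = monodromyTrace c + c 1 := by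
  have h₂ : y 2 = c 1 * y 1 - y 0 := by simpa using hy 0
  have h₃ : y 3 = c 2 * y 2 - y 1 := by simpa using hy 1
  rw [h₃, h₂, hy₁, hy₀, monodromyTrace]
  ring

end

/-- Proposition 7.4(3). -/
theorem tube_rank_three_prop_7_4_3 {R : Type*} [CommRing R]
    (x : ZMod 3 → ℕ → R) (hx : IsTubeSystem 3 x)
    (m n : ℕ) (hn : 3 * m + 3 ≤ n) :
    x 1 (3 * m + 3) * x 1 n
      = ∑ t ∈ Finset.range (2 * m + 3),
          if Even t then x 1 (n + 3 * m + 3 - 3 * t)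
          else x 2 1 * x 1 (n + 3 * m + 3 - 3 * t) := by
  obtain ⟨k, rfl⟩ : ∃ k, n = 3 * (m + 1) + k := ⟨n - (3 * m + 3), by omega⟩
  let c : ZMod 3 → R := fun z => x (1 + z) 1
  have hy (n : ℕ) : x 1 (n + 2) = c (n + 1 : ℕ) * x 1 (n + 1) - x 1 n := hx.apply_add_two 1 n
  have hw₁ : x 1 (3 * 1 + 0) = monodromyTrace c + x 2 1 :=
    apply_three_eq_monodromyTrace_add hy (hx.1 1) (by simp [c])
  have key := (solvesRecurrence_apply_three_mul_add hy 0).mul_eq_sum (hx.1 1) hw₁ (m + 1)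
    (solvesRecurrence_apply_three_mul_add hy k)
  rw [sum_range_alternating_reflect] at key
  refine key.trans (Finset.sum_congr (by ring_nf) fun t ht => ?_)
  have ht : t ≤ 2 * (m + 1) := Nat.lt_succ_iff.mp (Finset.mem_range.mp ht)
  rw [show 3 * (m + 1) + k + 3 * m + 3 - 3 * t = 3 * (2 * (m + 1) - t) + k by omega]
  split_ifs <;> ring
end
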